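/- There exists an office-like polygon all of whose vertices have integer coordinates such that every vertex guard set of it has dispersion distance at most 3. -/

import Mathlib

open Set
open scoped ENNReal

noncomputable section

/-- The plane, equipped with the `L¹` metric. -/
abbrev Plane : Type := WithLp 1 (ℝ × ℝ)

namespace DispersiveAGP

noncomputable instance : DecidableEq Plane := Classical.decEq _

/-- The `x`-coordinate of a point of the plane. -/
def px (p : Plane) : ℝ := (WithLp.equiv 1 (ℝ × ℝ) p).1

/-- The `y`-coordinate of a point of the plane. -/
def py (p : Plane) : ℝ := (WithLp.equiv 1 (ℝ × ℝ) p).2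

/-- The point of the plane with the given coordinates. -/
def pt (a b : ℝ) : Plane := (WithLp.equiv 1 (ℝ × ℝ)).symm (a, b)

/-- Data of an axis-parallel rectangle. -/
structure Rect where
  x1 : ℝ
  x2 : ℝ
  y1 : ℝ
  y2 : ℝ

noncomputable instance : DecidableEq Rect := Classical.decEq _

/-- The closed rectangle, as a set of points of the plane. -/
def Rect.toSet (R : Rect) : Set Plane :=
  {p | R.x1 ≤ px p ∧ px p ≤ R.x2 ∧ R.y1 ≤ py p ∧ py p ≤ R.y2}

/-- The open rectangle. -/
def Rect.interiorSet (R : Rect) : Set Plane :=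
  {p | R.x1 < px p ∧ px p < R.x2 ∧ R.y1 < py p ∧ py p < R.y2}

/-- The rectangle is nondegenerate. -/
def Rect.Nondegenerate (R : Rect) : Prop := R.x1 < R.x2 ∧ R.y1 < R.y2

/-- `p` and `q` r-see each other within the region `S`: the closed axis-parallel
rectangle with opposite corners `p` and `q` is contained in `S`. -/
def RSee (S : Set Plane) (p q : Plane) : Prop :=
  {r : Plane | min (px p) (px q) ≤ px r ∧ px r ≤ max (px p) (px q) ∧
      min (py p) (py q) ≤ py r ∧ py r ≤ max (py p) (py q)} ⊆ S

/-- A vertex of (the boundary of) the region `S`: a boundary point such that in no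
neighborhood of it is the boundary contained in a single line. -/
def IsVertex (S : Set Plane) (v : Plane) : Prop :=
  v ∈ frontier S ∧
    ∀ ε > (0 : ℝ), ¬ ∃ a b c : ℝ, (a ≠ 0 ∨ b ≠ 0) ∧
      ∀ q ∈ frontier S ∩ Metric.ball v ε, a * px q + b * py q = c

/-- A vertex guard set of the region `S`, under r-visibility. -/
def IsGuardSet (S : Set Plane) (G : Finset Plane) : Prop :=
  (∀ g ∈ G, IsVertex S g) ∧ ∀ p ∈ S, ∃ g ∈ G, RSee S g p

/-- Geodesic `L¹`-distance within `S`: the infimum of `L¹`-lengths (total variations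
with respect to the `L¹` metric) of paths from `p` to `q` that stay inside `S`. -/
def geodesic (S : Set Plane) (p q : Plane) : ℝ≥0∞ :=
  ⨅ (γ : Path p q) (_ : Set.range (fun t => γ t) ⊆ S),
    eVariationOn (fun t => γ t) Set.univ

/-- The dispersion distance of a guard set `G` within region `S`: the minimum geodesic
`L¹`-distance between two distinct guards. -/
def dispersion (S : Set Plane) (G : Finset Plane) : ℝ≥0∞ :=
  ⨅ (g ∈ G) (g' ∈ G) (_ : g ≠ g'), geodesic S g g'

/-- The guard set `G` has dispersion distance at least `ℓ`. -/
def DispersionAtLeast (S : Set Plane) (G : Finset Plane) (ℓ : ℝ≥0∞) : Prop :=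
  ∀ g ∈ G, ∀ g' ∈ G, g ≠ g' → ℓ ≤ geodesic S g g'

/-- `G` is a vertex guard set attaining the maximum possible dispersion distance. -/
def AttainsMaxDispersion (S : Set Plane) (G : Finset Plane) : Prop :=
  IsGuardSet S G ∧ ∀ G' : Finset Plane, IsGuardSet S G' → dispersion S G' ≤ dispersion S G

/-- The horizontal corridor `C` connects the room `R1` (on its left) with the room `R2`
(on its right): the two vertical sides of `C` are strictly contained in the relative
interiors of the corresponding vertical edges of `R1` resp. `R2`. -/
def ConnectsH (C R1 R2 : Rect) : Prop :=
  R1.x2 = C.x1 ∧ C.x2 = R2.x1 ∧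
  R1.y1 < C.y1 ∧ C.y2 < R1.y2 ∧ R2.y1 < C.y1 ∧ C.y2 < R2.y2

/-- The vertical corridor `C` connects the room `R1` (below) with the room `R2` (above). -/
def ConnectsV (C R1 R2 : Rect) : Prop :=
  R1.y2 = C.y1 ∧ C.y2 = R2.y1 ∧
  R1.x1 < C.x1 ∧ C.x2 < R1.x2 ∧ R2.x1 < C.x1 ∧ C.x2 < R2.x2

/-- The corridor `C` connects the rooms `R1` and `R2`. -/
def Connects (C R1 R2 : Rect) : Prop := ConnectsH C R1 R2 ∨ ConnectsV C R1 R2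

/-- An office-like polygon: a connected union of rectangular rooms linked by
rectangular corridors, each corridor connecting exactly two rooms and being strictly
narrower than both of them. -/
structure OfficePolygon where
  rooms : Finset Rect
  corridors : Finset Rect
  rooms_nonempty : rooms.Nonempty
  nondeg_rooms : ∀ R ∈ rooms, R.Nondegenerate
  nondeg_corridors : ∀ C ∈ corridors, C.Nondegenerate
  connects : ∀ C ∈ corridors, ∃ R1 ∈ rooms, ∃ R2 ∈ rooms, R1 ≠ R2 ∧ Connects C R1 R2
  corridor_room_disjoint : ∀ C ∈ corridors, ∀ R ∈ rooms, C.interiorSet ∩ R.toSet = ∅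
  rooms_disjoint : ∀ R1 ∈ rooms, ∀ R2 ∈ rooms, R1 ≠ R2 → R1.interiorSet ∩ R2.interiorSet = ∅
  corridors_disjoint : ∀ C1 ∈ corridors, ∀ C2 ∈ corridors, C1 ≠ C2 →
    C1.interiorSet ∩ C2.interiorSet = ∅
  connected : IsConnected ((⋃ R ∈ rooms, R.toSet) ∪ (⋃ C ∈ corridors, C.toSet))

/-- The polygonal region covered by an office-like polygon. -/
def OfficePolygon.region (P : OfficePolygon) : Set Plane :=
  (⋃ R ∈ P.rooms, R.toSet) ∪ (⋃ C ∈ P.corridors, C.toSet)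

/-- All vertices of the region lie on integer coordinates. -/
def HasIntegerVertices (S : Set Plane) : Prop :=
  ∀ v, IsVertex S v → ∃ a b : ℤ, v = pt a b

/-- Any two distinct vertices are at geodesic `L¹`-distance at least `1`. -/
def VertexSeparated (S : Set Plane) : Prop :=
  ∀ v w, IsVertex S v → IsVertex S w → v ≠ w → 1 ≤ geodesic S v w

/-- The corridors `C1` and `C2` are independent within `S`: no guard placed at a vertex
of one of them r-sees all of the other. -/
def IndependentCorridors (S : Set Plane) (C1 C2 : Rect) : Prop :=
  (∀ v, IsVertex S v → v ∈ C1.toSet → ∃ q ∈ C2.toSet, ¬ RSee S v q) ∧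
  (∀ v, IsVertex S v → v ∈ C2.toSet → ∃ q ∈ C1.toSet, ¬ RSee S v q)

/-- An office-like polygon is independent if all pairs of distinct corridors are
independent. -/
def OfficePolygon.Independent (P : OfficePolygon) : Prop :=
  ∀ C1 ∈ P.corridors, ∀ C2 ∈ P.corridors, C1 ≠ C2 → IndependentCorridors P.region C1 C2

/-!
Take two rooms `[0,2] × [0,7]` and `[3,5] × [0,7]` joined by the three unit corridors
`[2,3] × [2k+1, 2k+2]`, `k < 3`. The gaps between consecutive corridors are outside the polygon,
and the points of the outer walls are not vertices, so the center of corridor `k` is r-seen only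
by the four corners of corridor `k`: every vertex guard set contains a corner `g k` of each
corridor. Going up a room wall and then across a corridor, two such corners whose heights differ
by at most `2` are at geodesic distance at most `3`, and either `g 0, g 1` or `g 1, g 2` are.
-/

@[simp] lemma px_pt (a b : ℝ) : px (pt a b) = a := rfl
@[simp] lemma py_pt (a b : ℝ) : py (pt a b) = b := rfl

lemma dist_eq_abs_add_abs (p q : Plane) : dist p q = |px p - px q| + |py p - py q| := by
  simpa [Real.dist_eq, px, py] using WithLp.prod_dist_eq_add (p := 1) (by norm_num) p q

lemma abs_px_sub_le_dist (p q : Plane) : |px p - px q| ≤ dist p q := by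
  rw [dist_eq_abs_add_abs]; linarith [abs_nonneg (py p - py q)]

lemma abs_py_sub_le_dist (p q : Plane) : |py p - py q| ≤ dist p q := by
  rw [dist_eq_abs_add_abs]; linarith [abs_nonneg (px p - px q)]

lemma continuous_px : Continuous px :=
  continuous_fst.comp (WithLp.prod_continuous_ofLp 1 ℝ ℝ)

lemma geodesic_le_eVariationOn {S : Set Plane} {p q : Plane} (γ : Path p q) (hγ : range γ ⊆ S) :
    geodesic S p q ≤ eVariationOn γ univ :=
  iInf₂_le γ hγ

lemma eVariationOn_extend_le {X : Type*} [PseudoEMetricSpace X] {p q : X} (γ : Path p q)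
    (s : Set ℝ) : eVariationOn γ.extend s ≤ eVariationOn γ univ :=
  eVariationOn.comp_le_of_monotoneOn γ (projIcc 0 1 zero_le_one)
    ((monotone_projIcc _).monotoneOn _) (mapsTo_univ _ _)

lemma eVariationOn_trans_le {X : Type*} [PseudoEMetricSpace X] {p q r : X} (γ : Path p q)
    (γ' : Path q r) :
    eVariationOn (γ.trans γ') univ ≤ eVariationOn γ univ + eVariationOn γ' univ := by
  let half : unitInterval := ⟨1 / 2, by norm_num, by norm_num⟩
  have hsplit := eVariationOn.Icc_add_Icc (γ.trans γ') (s := univ) (b := half)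
    unitInterval.nonneg' unitInterval.le_one' (mem_univ _)
  rw [univ_inter, univ_inter, univ_inter,
    eq_univ_of_forall fun t => mem_Icc.2 ⟨unitInterval.nonneg', unitInterval.le_one'⟩] at hsplit
  rw [← hsplit]
  gcongr
  · calc eVariationOn (γ.trans γ') (Icc 0 half)
          = eVariationOn (γ.extend ∘ fun t : unitInterval => 2 * (t : ℝ)) (Icc 0 half) := by
            refine eVariationOn.eq_of_eqOn fun t ht => ?_
            have ht' : (t : ℝ) ≤ 2⁻¹ := by rw [← one_div]; exact ht.2
            simp [Path.trans, ht']
        _ ≤ eVariationOn γ.extend univ :=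
            eVariationOn.comp_le_of_monotoneOn _ _
              (fun s _ t _ hst => by simpa using hst) (mapsTo_univ _ _)
        _ ≤ eVariationOn γ univ := eVariationOn_extend_le γ univ
  · calc eVariationOn (γ.trans γ') (Icc half 1)
          = eVariationOn (γ'.extend ∘ fun t : unitInterval => 2 * (t : ℝ) - 1) (Icc half 1) := by
            refine eVariationOn.eq_of_eqOn fun t ht => ?_
            by_cases h : (t : ℝ) ≤ 1 / 2
            · have : (t : ℝ) = 1 / 2 := le_antisymm h ht.1
              simp [Path.trans, this]
            · simp only [one_div, not_le] at h
              simp [Path.trans, h]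
        _ ≤ eVariationOn γ'.extend univ :=
            eVariationOn.comp_le_of_monotoneOn _ _
              (fun s _ t _ hst => by simpa using hst) (mapsTo_univ _ _)
        _ ≤ eVariationOn γ' univ := eVariationOn_extend_le γ' univ

lemma geodesic_triangle (S : Set Plane) (p q r : Plane) :
    geodesic S p r ≤ geodesic S p q + geodesic S q r := by
  refine ENNReal.le_iInf_add_iInf fun γ γ' => ENNReal.le_iInf_add_iInf fun hγ hγ' => ?_
  refine (geodesic_le_eVariationOn (γ.trans γ') ?_).trans (eVariationOn_trans_le γ γ')
  rw [Path.trans_range]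
  exact union_subset hγ hγ'

lemma eVariationOn_segment_le {E : Type*} [NormedAddCommGroup E] [NormedSpace ℝ E] (p q : E) :
    eVariationOn (Path.segment p q) univ ≤ edist p q := by
  have hval : eVariationOn (fun t : unitInterval => (t : ℝ)) univ ≤ 1 := by
    simpa using eVariationOn.comp_le_of_monotoneOn id (s := Icc 0 1)
      (fun t : unitInterval => (t : ℝ)) (fun s _ t _ hst => hst) (fun t _ => t.2)
  calc eVariationOn (Path.segment p q) univ
      = eVariationOn (AffineMap.lineMap p q ∘ fun t : unitInterval => (t : ℝ)) univ := rfl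
    _ ≤ nndist p q * eVariationOn (fun t : unitInterval => (t : ℝ)) univ :=
        ((lipschitzWith_lineMap p q).lipschitzOnWith (s := univ)).comp_eVariationOn_le
          (mapsTo_univ _ _)
    _ ≤ nndist p q * 1 := by gcongr
    _ = edist p q := by rw [mul_one, edist_nndist]

lemma geodesic_le_edist_of_segment_subset {S : Set Plane} {p q : Plane}
    (h : segment ℝ p q ⊆ S) : geodesic S p q ≤ edist p q :=
  (geodesic_le_eVariationOn (Path.segment p q) (by rwa [Path.range_segment])).trans
    (eVariationOn_segment_le p q)

lemma Rect.toSet_eq_preimage (R : Rect) :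
    R.toSet = WithLp.equiv 1 (ℝ × ℝ) ⁻¹' (Icc R.x1 R.x2 ×ˢ Icc R.y1 R.y2) := by
  ext p
  simp only [Rect.toSet, mem_preimage, mem_prod, mem_Icc, and_assoc]
  rfl

lemma Rect.interiorSet_eq_preimage (R : Rect) :
    R.interiorSet = WithLp.equiv 1 (ℝ × ℝ) ⁻¹' (Ioo R.x1 R.x2 ×ˢ Ioo R.y1 R.y2) := by
  ext p
  simp only [Rect.interiorSet, mem_preimage, mem_prod, mem_Ioo, and_assoc]
  rfl

lemma Rect.isClosed_toSet (R : Rect) : IsClosed R.toSet := by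
  rw [R.toSet_eq_preimage]
  exact (isClosed_Icc.prod isClosed_Icc).preimage (WithLp.prod_continuous_ofLp 1 ℝ ℝ)

lemma Rect.isOpen_interiorSet (R : Rect) : IsOpen R.interiorSet := by
  rw [R.interiorSet_eq_preimage]
  exact (isOpen_Ioo.prod isOpen_Ioo).preimage (WithLp.prod_continuous_ofLp 1 ℝ ℝ)

lemma Rect.convex_toSet (R : Rect) : Convex ℝ R.toSet := by
  rw [R.toSet_eq_preimage]
  exact ((convex_Icc _ _).prod (convex_Icc _ _)).linear_preimage
    (WithLp.linearEquiv 1 ℝ (ℝ × ℝ)).toLinearMap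

lemma Rect.interiorSet_subset_toSet (R : Rect) : R.interiorSet ⊆ R.toSet :=
  fun _ ⟨h₁, h₂, h₃, h₄⟩ => ⟨h₁.le, h₂.le, h₃.le, h₄.le⟩

lemma Rect.interiorSet_subset_interior {R : Rect} {S : Set Plane} (h : R.toSet ⊆ S) :
    R.interiorSet ⊆ interior S :=
  interior_maximal (R.interiorSet_subset_toSet.trans h) R.isOpen_interiorSet

lemma not_isVertex_of_px_eq {S : Set Plane} {v : Plane} {ε : ℝ} (hε : 0 < ε)
    (h : ∀ q ∈ frontier S, dist q v < ε → px q = px v) : ¬ IsVertex S v :=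
  fun hv => hv.2 ε hε ⟨1, 0, px v, Or.inl one_ne_zero, fun q ⟨hq, hqv⟩ => by
    simpa using h q hq (Metric.mem_ball.1 hqv)⟩

lemma not_isVertex_of_py_eq {S : Set Plane} {v : Plane} {ε : ℝ} (hε : 0 < ε)
    (h : ∀ q ∈ frontier S, dist q v < ε → py q = py v) : ¬ IsVertex S v :=
  fun hv => hv.2 ε hε ⟨0, 1, py v, Or.inr one_ne_zero, fun q ⟨hq, hqv⟩ => by
    simpa using h q hq (Metric.mem_ball.1 hqv)⟩

lemma exists_pos_forall_eq_of_abs_sub_lt {Y : Set ℝ} (hY : Y.Finite) (y₀ : ℝ) :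
    ∃ ε > 0, ∀ y ∈ Y, |y - y₀| < ε → y = y₀ := by
  have hopen : IsOpen (Y \ {y₀})ᶜ := (hY.sdiff.isClosed).isOpen_compl
  obtain ⟨ε, hε, hball⟩ := Metric.isOpen_iff.1 hopen y₀ (fun h => h.2 rfl)
  refine ⟨ε, hε, fun y hy hyε => ?_⟩
  by_contra hne
  exact hball (by rwa [Metric.mem_ball, Real.dist_eq]) ⟨hy, hne⟩

/-- If `px v ∉ X`, then near `v` the frontier lies on the finitely many horizontal lines `Y`,
hence on the single line `y = py v`; symmetrically if `py v ∉ Y`. -/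
lemma IsVertex.mem_of_frontier_subset {S : Set Plane} {X Y : Set ℝ} (hX : X.Finite)
    (hY : Y.Finite) (hS : frontier S ⊆ {p | px p ∈ X ∨ py p ∈ Y}) {v : Plane}
    (hv : IsVertex S v) : px v ∈ X ∧ py v ∈ Y := by
  obtain ⟨ε, hε, hεX⟩ := exists_pos_forall_eq_of_abs_sub_lt hX (px v)
  obtain ⟨δ, hδ, hδY⟩ := exists_pos_forall_eq_of_abs_sub_lt hY (py v)
  constructor
  · by_contra hvX
    refine not_isVertex_of_py_eq (lt_min hε hδ) (fun q hq hqv => ?_) hv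
    have hqv' := lt_min_iff.1 hqv
    refine (hS hq).elim (fun hqX => absurd ?_ hvX) fun hqY => hδY _ hqY ?_
    · exact hεX _ hqX ((abs_px_sub_le_dist q v).trans_lt hqv'.1) ▸ hqX
    · exact (abs_py_sub_le_dist q v).trans_lt hqv'.2
  · by_contra hvY
    refine not_isVertex_of_px_eq (lt_min hε hδ) (fun q hq hqv => ?_) hv
    have hqv' := lt_min_iff.1 hqv
    refine (hS hq).elim (fun hqX => hεX _ hqX ?_) fun hqY => absurd ?_ hvY
    · exact (abs_px_sub_le_dist q v).trans_lt hqv'.1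
    · exact hδY _ hqY ((abs_py_sub_le_dist q v).trans_lt hqv'.2) ▸ hqY

def sideAbscissas (Rs : Finset Rect) : Set ℝ := {x | ∃ R ∈ Rs, x = R.x1 ∨ x = R.x2}

def sideOrdinates (Rs : Finset Rect) : Set ℝ := {y | ∃ R ∈ Rs, y = R.y1 ∨ y = R.y2}

lemma sideAbscissas_finite (Rs : Finset Rect) : (sideAbscissas Rs).Finite :=
  ((Rs.finite_toSet.image Rect.x1).union (Rs.finite_toSet.image Rect.x2)).subset
    fun _ ⟨R, hR, h⟩ => h.elim (fun h => Or.inl ⟨R, hR, h.symm⟩) fun h => Or.inr ⟨R, hR, h.symm⟩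

lemma sideOrdinates_finite (Rs : Finset Rect) : (sideOrdinates Rs).Finite :=
  ((Rs.finite_toSet.image Rect.y1).union (Rs.finite_toSet.image Rect.y2)).subset
    fun _ ⟨R, hR, h⟩ => h.elim (fun h => Or.inl ⟨R, hR, h.symm⟩) fun h => Or.inr ⟨R, hR, h.symm⟩

lemma isClosed_biUnion_toSet (Rs : Finset Rect) : IsClosed (⋃ R ∈ Rs, R.toSet) :=
  isClosed_biUnion_finset fun R _ => R.isClosed_toSet

lemma frontier_biUnion_toSet_subset (Rs : Finset Rect) :
    frontier (⋃ R ∈ Rs, R.toSet) ⊆ {p | px p ∈ sideAbscissas Rs ∨ py p ∈ sideOrdinates Rs} := by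
  intro v hv
  obtain ⟨R, hR, hvR⟩ := mem_iUnion₂.1 ((isClosed_biUnion_toSet Rs).frontier_subset hv)
  by_contra hside
  simp only [sideAbscissas, sideOrdinates, mem_ofPred_eq, not_or, not_exists, not_and] at hside
  obtain ⟨hx, hy⟩ := hside
  have hint : v ∈ R.interiorSet :=
    ⟨hvR.1.lt_of_ne' (hx R hR).1, hvR.2.1.lt_of_ne (hx R hR).2,
      hvR.2.2.1.lt_of_ne' (hy R hR).1, hvR.2.2.2.lt_of_ne (hy R hR).2⟩
  exact hv.2 (Rect.interiorSet_subset_interior (subset_biUnion_of_mem (u := Rect.toSet) hR) hint)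

lemma OfficePolygon.region_eq_biUnion (P : OfficePolygon) :
    P.region = ⋃ R ∈ P.rooms ∪ P.corridors, R.toSet :=
  (Finset.set_biUnion_union _ _ _).symm

lemma OfficePolygon.mem_sides_of_isVertex (P : OfficePolygon) {v : Plane}
    (hv : IsVertex P.region v) :
    px v ∈ sideAbscissas (P.rooms ∪ P.corridors) ∧
      py v ∈ sideOrdinates (P.rooms ∪ P.corridors) := by
  rw [P.region_eq_biUnion] at hv
  exact hv.mem_of_frontier_subset (sideAbscissas_finite _) (sideOrdinates_finite _)
    (frontier_biUnion_toSet_subset _)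

lemma OfficePolygon.hasIntegerVertices (P : OfficePolygon)
    (h : ∀ R ∈ P.rooms ∪ P.corridors, ∃ a b c d : ℤ, R = ⟨a, b, c, d⟩) :
    HasIntegerVertices P.region := by
  intro v hv
  obtain ⟨⟨R, hR, hx⟩, ⟨R', hR', hy⟩⟩ := P.mem_sides_of_isVertex hv
  obtain ⟨a, b, _, _, rfl⟩ := h R hR
  obtain ⟨_, _, c, d, rfl⟩ := h R' hR'
  obtain ⟨m, hm⟩ : ∃ m : ℤ, px v = m := hx.elim (⟨a, ·⟩) (⟨b, ·⟩)
  obtain ⟨n, hn⟩ : ∃ n : ℤ, py v = n := hy.elim (⟨c, ·⟩) (⟨d, ·⟩)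
  exact ⟨m, n, by rw [← hm, ← hn]; rfl⟩

lemma not_isVertex_of_left_side {S : Set Plane} {R : Rect} (hR : R.toSet ⊆ S)
    (hS : S ⊆ {p | R.x1 ≤ px p}) (hx : R.x1 < R.x2) {c : ℝ} (hc₁ : R.y1 < c) (hc₂ : c < R.y2) :
    ¬ IsVertex S (pt R.x1 c) := by
  refine not_isVertex_of_px_eq (lt_min (sub_pos.2 hx) (lt_min (sub_pos.2 hc₁) (sub_pos.2 hc₂)))
    fun q hq hqv => ?_
  have hclosed : IsClosed {p : Plane | R.x1 ≤ px p} :=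
    isClosed_le continuous_const continuous_px
  have hqx : R.x1 ≤ px q := closure_minimal hS hclosed (frontier_subset_closure hq)
  have hdx := (abs_px_sub_le_dist q _).trans_lt hqv
  have hdy := (abs_py_sub_le_dist q _).trans_lt hqv
  simp only [px_pt, py_pt, lt_min_iff, abs_lt] at hdx hdy
  refine le_antisymm (not_lt.1 fun hlt => hq.2 ?_) hqx
  exact Rect.interiorSet_subset_interior hR ⟨hlt, by linarith, by linarith, by linarith⟩

lemma not_isVertex_of_right_side {S : Set Plane} {R : Rect} (hR : R.toSet ⊆ S)
    (hS : S ⊆ {p | px p ≤ R.x2}) (hx : R.x1 < R.x2) {c : ℝ} (hc₁ : R.y1 < c) (hc₂ : c < R.y2) :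
    ¬ IsVertex S (pt R.x2 c) := by
  refine not_isVertex_of_px_eq (lt_min (sub_pos.2 hx) (lt_min (sub_pos.2 hc₁) (sub_pos.2 hc₂)))
    fun q hq hqv => ?_
  have hclosed : IsClosed {p : Plane | px p ≤ R.x2} :=
    isClosed_le continuous_px continuous_const
  have hqx : px q ≤ R.x2 := closure_minimal hS hclosed (frontier_subset_closure hq)
  have hdx := (abs_px_sub_le_dist q _).trans_lt hqv
  have hdy := (abs_py_sub_le_dist q _).trans_lt hqv
  simp only [px_pt, py_pt, lt_min_iff, abs_lt] at hdx hdy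
  refine le_antisymm hqx (not_lt.1 fun hlt => hq.2 ?_)
  exact Rect.interiorSet_subset_interior hR ⟨by linarith, hlt, by linarith, by linarith⟩

lemma isConnected_union_of_connectsH {R₁ C R₂ : Rect} (hR₁ : R₁.Nondegenerate)
    (hC : C.Nondegenerate) (hR₂ : R₂.Nondegenerate) (h : ConnectsH C R₁ R₂) :
    IsConnected (R₁.toSet ∪ C.toSet ∪ R₂.toSet) := by
  obtain ⟨h₁, h₂, h₃, h₄, h₅, h₆⟩ := h
  have hconn : ∀ R : Rect, R.Nondegenerate → IsConnected R.toSet := fun R hR =>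
    R.convex_toSet.isConnected ⟨pt R.x1 R.y1, le_rfl, hR.1.le, le_rfl, hR.2.le⟩
  refine IsConnected.union ⟨pt C.x2 C.y1, Or.inr ⟨hC.1.le, le_rfl, le_rfl, hC.2.le⟩,
      h₂ ▸ ⟨le_rfl, hR₂.1.le, h₅.le, hC.2.le.trans h₆.le⟩⟩
    (IsConnected.union ⟨pt C.x1 C.y1, h₁ ▸ ⟨hR₁.1.le, le_rfl, h₃.le, hC.2.le.trans h₄.le⟩,
      ⟨le_rfl, hC.1.le, le_rfl, hC.2.le⟩⟩ (hconn R₁ hR₁) (hconn C hC)) (hconn R₂ hR₂)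

def leftRoom : Rect := ⟨0, 2, 0, 7⟩

def rightRoom : Rect := ⟨3, 5, 0, 7⟩

def corridor (k : ℕ) : Rect := ⟨2, 3, 2 * k + 1, 2 * k + 2⟩

def officeRegion : Set Plane :=
  (⋃ R ∈ ({leftRoom, rightRoom} : Finset Rect), R.toSet) ∪
    ⋃ C ∈ (Finset.range 3).image corridor, C.toSet

lemma mem_officeRegion {p : Plane} :
    p ∈ officeRegion ↔
      p ∈ leftRoom.toSet ∨ p ∈ rightRoom.toSet ∨ ∃ k < 3, p ∈ (corridor k).toSet := by
  simp [officeRegion, or_assoc]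

lemma leftRoom_nondegenerate : leftRoom.Nondegenerate := by norm_num [Rect.Nondegenerate, leftRoom]

lemma rightRoom_nondegenerate : rightRoom.Nondegenerate := by
  norm_num [Rect.Nondegenerate, rightRoom]

lemma corridor_nondegenerate (k : ℕ) : (corridor k).Nondegenerate := by
  norm_num [Rect.Nondegenerate, corridor]

lemma connectsH_corridor {k : ℕ} (hk : k < 3) : ConnectsH (corridor k) leftRoom rightRoom := by
  have : (k : ℝ) ≤ 2 := by exact_mod_cast Nat.lt_succ_iff.1 hk
  refine ⟨rfl, rfl, ?_, ?_, ?_, ?_⟩ <;> simp only [corridor, leftRoom, rightRoom] <;> linarith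

lemma isConnected_officeRegion : IsConnected officeRegion := by
  have hpiece : ∀ k < 3, IsConnected (leftRoom.toSet ∪ (corridor k).toSet ∪ rightRoom.toSet) :=
    fun k hk => isConnected_union_of_connectsH leftRoom_nondegenerate (corridor_nondegenerate k)
      rightRoom_nondegenerate (connectsH_corridor hk)
  have hO : pt 0 0 ∈ leftRoom.toSet := by norm_num [Rect.toSet, leftRoom]
  refine ⟨⟨_, mem_officeRegion.2 (Or.inl hO)⟩, isPreconnected_of_forall (pt 0 0) fun p hp => ?_⟩
  obtain ⟨k, hk, hpk⟩ : ∃ k < 3, p ∈ leftRoom.toSet ∪ (corridor k).toSet ∪ rightRoom.toSet := by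
    rcases mem_officeRegion.1 hp with hp | hp | ⟨k, hk, hp⟩
    exacts [⟨0, by norm_num, Or.inl (Or.inl hp)⟩, ⟨0, by norm_num, Or.inr hp⟩,
      ⟨k, hk, Or.inl (Or.inr hp)⟩]
  refine ⟨_, fun q hq => ?_, Or.inl (Or.inl hO), hpk, (hpiece k hk).isPreconnected⟩
  rcases hq with (hq | hq) | hq
  exacts [mem_officeRegion.2 (Or.inl hq), mem_officeRegion.2 (Or.inr (Or.inr ⟨k, hk, hq⟩)),
    mem_officeRegion.2 (Or.inr (Or.inl hq))]

lemma corridor_interiorSet_inter_eq_empty {j k : ℕ} (h : j ≠ k) :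
    (corridor j).interiorSet ∩ (corridor k).interiorSet = ∅ := by
  refine eq_empty_of_forall_notMem fun p ⟨⟨_, _, hj₁, hj₂⟩, ⟨_, _, hk₁, hk₂⟩⟩ => h ?_
  simp only [corridor] at hj₁ hj₂ hk₁ hk₂
  have hjk : j < k + 1 := by exact_mod_cast (by linarith : (j : ℝ) < k + 1)
  have hkj : k < j + 1 := by exact_mod_cast (by linarith : (k : ℝ) < j + 1)
  omega

def officeExample : OfficePolygon where
  rooms := {leftRoom, rightRoom}
  corridors := (Finset.range 3).image corridor
  rooms_nonempty := Finset.insert_nonempty _ _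
  nondeg_rooms := by simp [leftRoom_nondegenerate, rightRoom_nondegenerate]
  nondeg_corridors := by simp [corridor_nondegenerate]
  connects := by
    simp only [Finset.forall_mem_image, Finset.mem_range]
    exact fun k hk => ⟨leftRoom, by simp, rightRoom, by simp, by simp [leftRoom, rightRoom],
      Or.inl (connectsH_corridor hk)⟩
  corridor_room_disjoint := by
    simp only [Finset.forall_mem_image, Finset.mem_insert, Finset.mem_singleton]
    rintro k - R (rfl | rfl) <;>
      refine eq_empty_of_forall_notMem fun p ⟨⟨h₁, h₂, _⟩, h₃, h₄, _⟩ => ?_ <;>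
      simp only [corridor, leftRoom, rightRoom] at h₁ h₂ h₃ h₄ <;> linarith
  rooms_disjoint := by
    simp only [Finset.mem_insert, Finset.mem_singleton]
    rintro R (rfl | rfl) R' (rfl | rfl) hne <;> (try exact absurd rfl hne) <;>
      refine eq_empty_of_forall_notMem fun p ⟨⟨h₁, h₂, _⟩, h₃, h₄, _⟩ => ?_ <;>
      simp only [leftRoom, rightRoom] at h₁ h₂ h₃ h₄ <;> linarith
  corridors_disjoint := by
    simp only [Finset.forall_mem_image]
    exact fun j _ k _ hne => corridor_interiorSet_inter_eq_empty fun h => hne (h ▸ rfl)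
  connected := isConnected_officeRegion

lemma hasIntegerVertices_officeExample : HasIntegerVertices officeExample.region := by
  refine officeExample.hasIntegerVertices ?_
  simp only [officeExample, Finset.mem_union, Finset.mem_insert, Finset.mem_singleton,
    Finset.mem_image, Finset.mem_range]
  rintro R ((rfl | rfl) | ⟨k, -, rfl⟩)
  exacts [⟨0, 2, 0, 7, by simp [leftRoom]⟩, ⟨3, 5, 0, 7, by simp [rightRoom]⟩,
    ⟨2, 3, 2 * k + 1, 2 * k + 2, by simp [corridor]⟩]

lemma px_eq_of_isVertex_officeRegion {v : Plane} (hv : IsVertex officeRegion v) :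
    px v = 0 ∨ px v = 2 ∨ px v = 3 ∨ px v = 5 := by
  obtain ⟨R, hR, hx⟩ := (officeExample.mem_sides_of_isVertex hv).1
  simp only [officeExample, Finset.mem_union, Finset.mem_insert, Finset.mem_singleton,
    Finset.mem_image, Finset.mem_range] at hR
  rcases hR with (rfl | rfl) | ⟨k, -, rfl⟩ <;> simp only [leftRoom, rightRoom, corridor] at hx <;>
    tauto

lemma officeRegion_subset_px_nonneg : officeRegion ⊆ {p | 0 ≤ px p} := by
  intro p hp
  rcases mem_officeRegion.1 hp with h | h | ⟨k, -, h⟩ <;>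
    simp only [Rect.toSet, leftRoom, rightRoom, corridor, mem_ofPred_eq] at h ⊢ <;> linarith

lemma officeRegion_subset_px_le_five : officeRegion ⊆ {p | px p ≤ 5} := by
  intro p hp
  rcases mem_officeRegion.1 hp with h | h | ⟨k, -, h⟩ <;>
    simp only [Rect.toSet, leftRoom, rightRoom, corridor, mem_ofPred_eq] at h ⊢ <;> linarith

lemma gap_notMem_officeRegion (j : ℕ) : pt (5 / 2) (2 * j + 1 / 2) ∉ officeRegion := by
  intro h
  rcases mem_officeRegion.1 h with h | h | ⟨k, -, h⟩ <;>
    simp only [Rect.toSet, leftRoom, rightRoom, corridor, mem_ofPred_eq, px_pt, py_pt] at h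
  · linarith [h.2.1]
  · linarith [h.1]
  · have hkj : k < j := by exact_mod_cast (by linarith [h.2.2.1] : (k : ℝ) < j)
    have hjk : j < k + 1 := by exact_mod_cast (by linarith [h.2.2.2] : (j : ℝ) < k + 1)
    omega

def corridorCenter (k : ℕ) : Plane := pt (5 / 2) (2 * k + 3 / 2)

lemma corridorCenter_mem {k : ℕ} (hk : k < 3) : corridorCenter k ∈ officeRegion :=
  mem_officeRegion.2 (Or.inr (Or.inr ⟨k, hk, by norm_num [corridorCenter, Rect.toSet, corridor]⟩))

def IsCorridorCorner (k : ℕ) (v : Plane) : Prop :=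
  (px v = 2 ∨ px v = 3) ∧ (py v = 2 * k + 1 ∨ py v = 2 * k + 2)

/-- The gaps `pt (5/2) (2j + 1/2)` between consecutive corridors lie outside the region, so a
point r-seeing the center of corridor `k` must lie strictly between the gaps `j = k` and
`j = k + 1`. -/
lemma py_mem_Ioo_of_rSee_corridorCenter {k : ℕ} {v : Plane}
    (hsee : RSee officeRegion v (corridorCenter k)) : py v ∈ Ioo (2 * k : ℝ) (2 * k + 3) := by
  constructor
  · by_contra! h
    refine gap_notMem_officeRegion k (hsee ⟨?_, ?_, ?_, ?_⟩) <;>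
      simp only [corridorCenter, px_pt, py_pt]
    exacts [min_le_right _ _, le_max_right _ _, min_le_of_left_le (by linarith),
      le_max_of_le_right (by linarith)]
  · by_contra! h
    refine gap_notMem_officeRegion (k + 1) (hsee ⟨?_, ?_, ?_, ?_⟩) <;>
      simp only [corridorCenter, px_pt, py_pt, Nat.cast_add, Nat.cast_one]
    exacts [min_le_right _ _, le_max_right _ _, min_le_of_right_le (by linarith),
      le_max_of_le_left (by linarith)]

lemma isCorridorCorner_of_rSee {k : ℕ} (hk : k < 3) {v : Plane} (hv : IsVertex officeRegion v)
    (hsee : RSee officeRegion v (corridorCenter k)) : IsCorridorCorner k v := by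
  obtain ⟨hbelow, habove⟩ := py_mem_Ioo_of_rSee_corridorCenter hsee
  obtain ⟨a, b, hab⟩ := hasIntegerVertices_officeExample v hv
  have hy : py v = 2 * k + 1 ∨ py v = 2 * k + 2 := by
    rw [hab, py_pt] at hbelow habove ⊢
    have h₁ : 2 * (k : ℤ) < b := by exact_mod_cast hbelow
    have h₂ : b < 2 * (k : ℤ) + 3 := by exact_mod_cast habove
    rcases (by omega : b = 2 * k + 1 ∨ b = 2 * k + 2) with rfl | rfl
    exacts [Or.inl (by push_cast; ring), Or.inr (by push_cast; ring)]
  have hk' : (k : ℝ) ≤ 2 := by exact_mod_cast Nat.lt_succ_iff.1 hk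
  have hy₁ : (0 : ℝ) < py v := by rcases hy with h | h <;> rw [h] <;> positivity
  have hy₂ : py v < 7 := by rcases hy with h | h <;> linarith
  refine ⟨?_, hy⟩
  rcases px_eq_of_isVertex_officeRegion hv with h | h | h | h
  · refine absurd (show IsVertex officeRegion (pt leftRoom.x1 (py v)) by rwa [leftRoom, ← h])
      (not_isVertex_of_left_side (fun p hp => mem_officeRegion.2 (Or.inl hp))
        officeRegion_subset_px_nonneg leftRoom_nondegenerate.1 hy₁ hy₂)
  · exact Or.inl h
  · exact Or.inr h
  · refine absurd (show IsVertex officeRegion (pt rightRoom.x2 (py v)) by rwa [rightRoom, ← h])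
      (not_isVertex_of_right_side (fun p hp => mem_officeRegion.2 (Or.inr (Or.inl hp)))
        officeRegion_subset_px_le_five rightRoom_nondegenerate.1 hy₁ hy₂)

lemma IsCorridorCorner.mem_corridor {k : ℕ} {v : Plane} (hv : IsCorridorCorner k v) :
    v ∈ (corridor k).toSet := by
  obtain ⟨hx, hy⟩ := hv
  refine ⟨?_, ?_, ?_, ?_⟩ <;> simp only [corridor] <;>
    first | (rcases hx with h | h <;> linarith) | (rcases hy with h | h <;> linarith)

lemma IsCorridorCorner.py_mem_Icc {k : ℕ} (hk : k < 3) {v : Plane} (hv : IsCorridorCorner k v) :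
    py v ∈ Icc (0 : ℝ) 7 := by
  have : (k : ℝ) ≤ 2 := by exact_mod_cast Nat.lt_succ_iff.1 hk
  rcases hv.2 with h | h <;> constructor <;> linarith [(k.cast_nonneg : (0 : ℝ) ≤ k)]

lemma IsCorridorCorner.ne {j k : ℕ} (hjk : j < k) {v w : Plane} (hv : IsCorridorCorner j v)
    (hw : IsCorridorCorner k w) : v ≠ w := by
  rintro rfl
  have : (j : ℝ) + 1 ≤ k := by exact_mod_cast hjk
  rcases hv.2 with h | h <;> rcases hw.2 with h' | h' <;> linarith

lemma segment_subset_officeRegion_of_px_eq {v w : Plane} (hx : px v = 2 ∨ px v = 3)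
    (hvw : px w = px v) (hv : py v ∈ Icc (0 : ℝ) 7) (hw : py w ∈ Icc (0 : ℝ) 7) :
    segment ℝ v w ⊆ officeRegion := by
  rcases hx with hx | hx
  · refine (leftRoom.convex_toSet.segment_subset ?_ ?_).trans
      fun p hp => mem_officeRegion.2 (Or.inl hp)
    exacts [by norm_num [Rect.toSet, leftRoom, hx, hv.1, hv.2],
      by norm_num [Rect.toSet, leftRoom, hvw, hx, hw.1, hw.2]]
  · refine (rightRoom.convex_toSet.segment_subset ?_ ?_).trans
      fun p hp => mem_officeRegion.2 (Or.inr (Or.inl hp))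
    exacts [by norm_num [Rect.toSet, rightRoom, hx, hv.1, hv.2],
      by norm_num [Rect.toSet, rightRoom, hvw, hx, hw.1, hw.2]]

lemma geodesic_le_of_isCorridorCorner {j k : ℕ} (hj : j < 3) (hk : k < 3) {v w : Plane}
    (hv : IsCorridorCorner j v) (hw : IsCorridorCorner k w) :
    geodesic officeRegion v w ≤ ENNReal.ofReal (|py v - py w| + 1) := by
  set u := pt (px v) (py w)
  have hu : IsCorridorCorner k u := ⟨hv.1, hw.2⟩
  have hvu : segment ℝ v u ⊆ officeRegion :=
    segment_subset_officeRegion_of_px_eq hv.1 rfl (hv.py_mem_Icc hj) (hw.py_mem_Icc hk)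
  have huw : segment ℝ u w ⊆ officeRegion :=
    ((corridor k).convex_toSet.segment_subset hu.mem_corridor hw.mem_corridor).trans
      fun p hp => mem_officeRegion.2 (Or.inr (Or.inr ⟨k, hk, hp⟩))
  have hdx : |px v - px w| ≤ 1 := by
    rw [abs_le]; rcases hv.1 with h | h <;> rcases hw.1 with h' | h' <;> constructor <;> linarith
  calc geodesic officeRegion v w
      ≤ geodesic officeRegion v u + geodesic officeRegion u w := geodesic_triangle _ _ _ _
    _ ≤ edist v u + edist u w :=
        add_le_add (geodesic_le_edist_of_segment_subset hvu)
          (geodesic_le_edist_of_segment_subset huw)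
    _ = ENNReal.ofReal (|py v - py w| + |px v - px w|) := by
        rw [edist_dist, edist_dist, dist_eq_abs_add_abs, dist_eq_abs_add_abs,
          ← ENNReal.ofReal_add (by positivity) (by positivity)]
        simp [u]
    _ ≤ ENNReal.ofReal (|py v - py w| + 1) := by gcongr

lemma geodesic_le_three_of_isCorridorCorner {j k : ℕ} (hj : j < 3) (hk : k < 3) {v w : Plane}
    (hv : IsCorridorCorner j v) (hw : IsCorridorCorner k w) (h : |py v - py w| ≤ 2) :
    geodesic officeRegion v w ≤ 3 :=
  (geodesic_le_of_isCorridorCorner hj hk hv hw).trans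
    ((ENNReal.ofReal_le_ofReal (by linarith : |py v - py w| + 1 ≤ 3)).trans_eq
      (ENNReal.ofReal_ofNat 3))

lemma exists_guards_geodesic_le_three {G : Finset Plane} (hG : IsGuardSet officeRegion G) :
    ∃ g ∈ G, ∃ g' ∈ G, g ≠ g' ∧ geodesic officeRegion g g' ≤ 3 := by
  have hguard : ∀ k < 3, ∃ g ∈ G, IsCorridorCorner k g := fun k hk => by
    obtain ⟨g, hg, hsee⟩ := hG.2 _ (corridorCenter_mem hk)
    exact ⟨g, hg, isCorridorCorner_of_rSee hk (hG.1 g hg) hsee⟩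
  obtain ⟨g₀, hg₀, h₀⟩ := hguard 0 (by norm_num)
  obtain ⟨g₁, hg₁, h₁⟩ := hguard 1 (by norm_num)
  obtain ⟨g₂, hg₂, h₂⟩ := hguard 2 (by norm_num)
  by_cases h : |py g₀ - py g₁| ≤ 2
  · exact ⟨g₀, hg₀, g₁, hg₁, h₀.ne zero_lt_one h₁,
      geodesic_le_three_of_isCorridorCorner (by norm_num) (by norm_num) h₀ h₁ h⟩
  · have e₁ : py g₁ = 2 * (1 : ℕ) + 2 := by
      refine h₁.2.resolve_left fun e₁ => h ?_
      rcases h₀.2 with e₀ | e₀ <;> norm_num [e₀, e₁, abs_le]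
    refine ⟨g₁, hg₁, g₂, hg₂, h₁.ne one_lt_two h₂,
      geodesic_le_three_of_isCorridorCorner (by norm_num) (by norm_num) h₁ h₂ ?_⟩
    rcases h₂.2 with e₂ | e₂ <;> norm_num [e₁, e₂, abs_le]

/-- There exists an office-like polygon all of whose vertices have
integer coordinates such that every vertex guard set of it has dispersion distance at
most `3`, i.e. contains two distinct guards at geodesic `L¹`-distance at most `3`. -/
theorem exists_integer_office_polygon_dispersion_le_three :
    ∃ P : OfficePolygon, HasIntegerVertices P.region ∧
      ∀ G : Finset Plane, IsGuardSet P.region G →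
        ∃ g ∈ G, ∃ g' ∈ G, g ≠ g' ∧ geodesic P.region g g' ≤ 3 :=
  ⟨officeExample, hasIntegerVertices_officeExample, fun _ => exists_guards_geodesic_le_three⟩

end DispersiveAGP
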